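/- arXiv:2406.18400 — 6 statements merged into one kernel-verified Lean document; each statement's English description precedes it below -/
import Mathlib

section
/- Let m ≥ 3, let tokens be identified with binary vectors in {0,1}^m (so V = 2^m tokens), let β > 0 and 0 < ε < 1. Consider contexts x = (x_1,…,x_L) whose tokens are drawn i.i.d. from the informative conditional distribution π(·|y). Then there exist an embedding dimension d, an embedding matrix W_E ∈ ℝ^{d×V} whose columns {W_E(t)} form an orthonormal family, and the constructed value matrix W_V = Σ_t W_E(t)(Σ_{t'∈N1(t)} W_E(t')ᵀ), together with a threshold L₀ (depending on m, β, ε), such that for every L ≥ L₀ and every token y, the probability over x ~ π(·|y)^{⊗L} that the logit f_y(x) fails to be the strict maximum over all tokens (i.e. that there exists t ≠ y with f_t(x) ≥ f_y(x)) is at most ε. -/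
open Matrix
open scoped Classical

section prob
open Finset

variable {α : Type*} [Fintype α]

lemma sum_prod_eq_prod_sum {L : ℕ} (g : Fin L → α → ℝ) :
    ∑ x : Fin L → α, ∏ l, g l (x l) = ∏ l, ∑ a, g l a := by
  rw [Finset.prod_univ_sum, Fintype.piFinset_univ]

lemma expect_pair_ne {L : ℕ} (w η : α → ℝ) (hw1 : ∑ a, w a = 1)
    (hmean : ∑ a, w a * η a = 0) {l₀ l₁ : Fin L} (h : l₀ ≠ l₁) :
    ∑ x : Fin L → α, (∏ l, w (x l)) * (η (x l₀) * η (x l₁)) = 0 := by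
  set g : Fin L → α → ℝ := fun l a => w a * (if l = l₀ then η a else if l = l₁ then η a else 1)
    with hg
  have key : ∀ x : Fin L → α, (∏ l, w (x l)) * (η (x l₀) * η (x l₁)) = ∏ l, g l (x l) := by
    intro x
    simp only [hg]
    rw [Finset.prod_mul_distrib]
    congr 1
    have : ∏ l, (if l = l₀ then η (x l) else if l = l₁ then η (x l) else 1)
        = ∏ l ∈ ({l₀, l₁} : Finset (Fin L)), (if l = l₀ then η (x l) else if l = l₁ then η (x l) else 1) := by
      refine (Finset.prod_subset (Finset.subset_univ _) ?_).symm
      intro l _ hl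
      simp only [Finset.mem_insert, Finset.mem_singleton, not_or] at hl
      simp [hl.1, hl.2]
    rw [this, Finset.prod_pair h]
    simp [h, h.symm]
  calc ∑ x : Fin L → α, (∏ l, w (x l)) * (η (x l₀) * η (x l₁))
      = ∑ x : Fin L → α, ∏ l, g l (x l) := Finset.sum_congr rfl (fun x _ => key x)
    _ = ∏ l, ∑ a, g l a := sum_prod_eq_prod_sum g
    _ = 0 := by
        refine Finset.prod_eq_zero (Finset.mem_univ l₀) ?_
        simpa [hg] using hmean

lemma expect_diag {L : ℕ} (w η : α → ℝ) (hw1 : ∑ a, w a = 1) (l₀ : Fin L) :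
    ∑ x : Fin L → α, (∏ l, w (x l)) * (η (x l₀) * η (x l₀)) = ∑ a, w a * (η a * η a) := by
  set g : Fin L → α → ℝ := fun l a => w a * (if l = l₀ then η a * η a else 1) with hg
  have key : ∀ x : Fin L → α, (∏ l, w (x l)) * (η (x l₀) * η (x l₀)) = ∏ l, g l (x l) := by
    intro x
    simp only [hg]
    rw [Finset.prod_mul_distrib]
    congr 1
    rw [Finset.prod_ite_eq' Finset.univ l₀ (fun l => η (x l) * η (x l))]
    simp
  calc ∑ x : Fin L → α, (∏ l, w (x l)) * (η (x l₀) * η (x l₀))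
      = ∑ x : Fin L → α, ∏ l, g l (x l) := Finset.sum_congr rfl (fun x _ => key x)
    _ = ∏ l, ∑ a, g l a := sum_prod_eq_prod_sum g
    _ = ∑ a, g l₀ a := by
        refine Finset.prod_eq_single l₀ (fun l _ hl => ?_) (fun h => absurd (Finset.mem_univ l₀) h)
        simp only [hg, if_neg hl]
        simpa using hw1
    _ = ∑ a, w a * (η a * η a) := by simp [hg]

lemma expect_sum_sq {L : ℕ} (w η : α → ℝ) (hw0 : ∀ a, 0 ≤ w a) (hw1 : ∑ a, w a = 1)
    (hmean : ∑ a, w a * η a = 0) (hb : ∀ a, η a * η a ≤ 4) :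
    ∑ x : Fin L → α, (∏ l, w (x l)) * (∑ l, η (x l)) ^ 2 ≤ 4 * L := by
  have expand : ∀ x : Fin L → α, (∏ l, w (x l)) * (∑ l, η (x l)) ^ 2
      = ∑ l₀ : Fin L, ∑ l₁ : Fin L, (∏ l, w (x l)) * (η (x l₀) * η (x l₁)) := by
    intro x
    rw [sq, Finset.sum_mul_sum]
    rw [Finset.mul_sum]
    exact Finset.sum_congr rfl fun l₀ _ => by rw [Finset.mul_sum]
  calc ∑ x : Fin L → α, (∏ l, w (x l)) * (∑ l, η (x l)) ^ 2
      = ∑ l₀ : Fin L, ∑ l₁ : Fin L, ∑ x : Fin L → α, (∏ l, w (x l)) * (η (x l₀) * η (x l₁)) := by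
        simp_rw [expand]
        rw [Finset.sum_comm]
        exact Finset.sum_congr rfl fun l₀ _ => Finset.sum_comm
    _ = ∑ l₀ : Fin L, ∑ a, w a * (η a * η a) := by
        refine Finset.sum_congr rfl fun l₀ _ => ?_
        have : ∀ l₁ : Fin L, (∑ x : Fin L → α, (∏ l, w (x l)) * (η (x l₀) * η (x l₁)))
            = if l₁ = l₀ then ∑ a, w a * (η a * η a) else 0 := by
          intro l₁
          by_cases h : l₁ = l₀
          · subst h; rw [if_pos rfl]; exact expect_diag w η hw1 l₁
          · rw [if_neg h]; exact expect_pair_ne w η hw1 hmean (Ne.symm h)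
        simp_rw [this]
        simp
    _ ≤ 4 * L := by
        rw [Finset.sum_const, Finset.card_univ, Fintype.card_fin, nsmul_eq_mul, mul_comm]
        have : ∑ a, w a * (η a * η a) ≤ 4 := by
          calc ∑ a, w a * (η a * η a) ≤ ∑ a, w a * 4 :=
                Finset.sum_le_sum fun a _ => mul_le_mul_of_nonneg_left (hb a) (hw0 a)
            _ = 4 := by rw [← Finset.sum_mul, hw1, one_mul]
        nlinarith [Nat.cast_nonneg (α := ℝ) L]

lemma cheby {L : ℕ} (w ζ : α → ℝ) (hw0 : ∀ a, 0 ≤ w a) (hw1 : ∑ a, w a = 1)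
    (hζ : ∀ a, |ζ a| ≤ 1) (δ : ℝ) (hδ : 0 < δ) (hmean : δ ≤ ∑ a, w a * ζ a)
    (hL : 1 ≤ L) :
    ∑ x ∈ Finset.univ.filter (fun x : Fin L → α => ∑ l, ζ (x l) ≤ 0), ∏ l, w (x l)
      ≤ 4 / (L * δ ^ 2) := by
  set μ : ℝ := ∑ a, w a * ζ a with hμ
  set η : α → ℝ := fun a => ζ a - μ with hη
  have hμ1 : |μ| ≤ 1 := by
    calc |μ| ≤ ∑ a, |w a * ζ a| := Finset.abs_sum_le_sum_abs _ _
      _ ≤ ∑ a, w a := Finset.sum_le_sum fun a _ => by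
          rw [abs_mul, abs_of_nonneg (hw0 a)]
          calc w a * |ζ a| ≤ w a * 1 := mul_le_mul_of_nonneg_left (hζ a) (hw0 a)
            _ = w a := mul_one _
      _ = 1 := hw1
  have hmean0 : ∑ a, w a * η a = 0 := by
    simp only [hη, mul_sub, Finset.sum_sub_distrib, ← Finset.sum_mul, hw1, one_mul]
    simp [← hμ]
  have hb : ∀ a, η a * η a ≤ 4 := by
    intro a
    have : |η a| ≤ 2 := by
      simp only [hη]
      calc |ζ a - μ| ≤ |ζ a| + |μ| := abs_sub _ _
        _ ≤ 1 + 1 := add_le_add (hζ a) hμ1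
        _ = 2 := by norm_num
    nlinarith [abs_nonneg (η a), sq_abs (η a)]
  have hLpos : (0:ℝ) < L := by exact_mod_cast hL
  have hden : (0:ℝ) < L * δ ^ 2 := by positivity
  -- on the event, (∑ η)² ≥ (L δ)²
  have key : ∀ x : Fin L → α, (∑ l, ζ (x l) ≤ 0) →
      (L:ℝ) ^ 2 * δ ^ 2 ≤ (∑ l, η (x l)) ^ 2 := by
    intro x hx
    have h1 : ∑ l, η (x l) = (∑ l, ζ (x l)) - L * μ := by
      simp [hη, Finset.sum_sub_distrib, mul_comm]
    have h2 : ∑ l, η (x l) ≤ -(L * δ) := by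
      rw [h1]
      have : (L:ℝ) * δ ≤ (L:ℝ) * μ := mul_le_mul_of_nonneg_left hmean (le_of_lt hLpos)
      linarith
    have h3 : (L * δ) ^ 2 ≤ (∑ l, η (x l)) ^ 2 := by
      have hLδ : (0:ℝ) ≤ L * δ := by positivity
      nlinarith
    calc (L:ℝ) ^ 2 * δ ^ 2 = (L * δ) ^ 2 := by ring
      _ ≤ _ := h3
  calc ∑ x ∈ Finset.univ.filter (fun x : Fin L → α => ∑ l, ζ (x l) ≤ 0), ∏ l, w (x l)
      ≤ ∑ x ∈ Finset.univ.filter (fun x : Fin L → α => ∑ l, ζ (x l) ≤ 0),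
          (∏ l, w (x l)) * (∑ l, η (x l)) ^ 2 / ((L:ℝ) ^ 2 * δ ^ 2) := by
        refine Finset.sum_le_sum fun x hx => ?_
        rw [Finset.mem_filter] at hx
        have hP : 0 ≤ ∏ l, w (x l) := Finset.prod_nonneg fun l _ => hw0 _
        have hk := key x hx.2
        have hpos : (0:ℝ) < (L:ℝ) ^ 2 * δ ^ 2 := by positivity
        rw [le_div_iff₀ hpos]
        exact mul_le_mul_of_nonneg_left hk hP
    _ ≤ ∑ x : Fin L → α, (∏ l, w (x l)) * (∑ l, η (x l)) ^ 2 / ((L:ℝ) ^ 2 * δ ^ 2) := by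
        refine Finset.sum_le_sum_of_subset_of_nonneg (Finset.filter_subset _ _) ?_
        intro x _ _
        have hP : 0 ≤ ∏ l, w (x l) := Finset.prod_nonneg fun l _ => hw0 _
        positivity
    _ ≤ 4 * L / ((L:ℝ) ^ 2 * δ ^ 2) := by
        rw [← Finset.sum_div]
        apply div_le_div_of_nonneg_right ?_ (by positivity)
        · exact expect_sum_sq w η hw0 hw1 hmean0 hb
    _ = 4 / (L * δ ^ 2) := by
        field_simp

end prob

section hamm
open Finset

variable {m : ℕ}

noncomputable def bflip (i : Fin m) (t : Fin m → Bool) : Fin m → Bool :=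
  Function.update t i (!t i)

lemma bflip_apply_self (i : Fin m) (t : Fin m → Bool) : bflip i t i = !t i := by
  simp [bflip]

lemma bflip_apply_ne (i j : Fin m) (t : Fin m → Bool) (h : j ≠ i) : bflip i t j = t j := by
  simp [bflip, Function.update_of_ne h]

lemma hammingDist_eq_card (t y : Fin m → Bool) :
    hammingDist t y = (Finset.univ.filter fun i => t i ≠ y i).card := rfl

lemma filter_flip_eq (i : Fin m) (t y : Fin m → Bool) (h : t i = y i) :
    (Finset.univ.filter fun j => bflip i t j ≠ y j)
      = insert i (Finset.univ.filter fun j => t j ≠ y j) := by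
  ext j
  simp only [Finset.mem_filter, Finset.mem_univ, true_and, Finset.mem_insert]
  by_cases hj : j = i
  · subst hj
    simp [bflip_apply_self, h]
  · simp [bflip_apply_ne i j t hj, hj]

lemma filter_flip_eq' (i : Fin m) (t y : Fin m → Bool) (h : t i ≠ y i) :
    (Finset.univ.filter fun j => bflip i t j ≠ y j)
      = (Finset.univ.filter fun j => t j ≠ y j).erase i := by
  ext j
  simp only [Finset.mem_filter, Finset.mem_univ, true_and, Finset.mem_erase]
  by_cases hj : j = i
  · subst hj
    simp only [bflip_apply_self]
    constructor
    · intro hc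
      exact absurd (by revert h hc; cases t j <;> cases y j <;> simp) hc
    · intro hc; exact absurd rfl hc.1
  · simp [bflip_apply_ne i j t hj, hj]

lemma hammingDist_flip_eq_add (i : Fin m) (t y : Fin m → Bool) (h : t i = y i) :
    hammingDist (bflip i t) y = hammingDist t y + 1 := by
  rw [hammingDist_eq_card, hammingDist_eq_card, filter_flip_eq i t y h,
    Finset.card_insert_of_notMem (by simp [h])]

lemma hammingDist_flip_eq_sub (i : Fin m) (t y : Fin m → Bool) (h : t i ≠ y i) :
    hammingDist (bflip i t) y = hammingDist t y - 1 := by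
  rw [hammingDist_eq_card, hammingDist_eq_card, filter_flip_eq' i t y h,
    Finset.card_erase_of_mem (by simp [h])]

lemma hammingDist_flip_self (i : Fin m) (t : Fin m → Bool) :
    hammingDist t (bflip i t) = 1 := by
  rw [hammingDist_comm, hammingDist_flip_eq_add i t t rfl, hammingDist_self]

-- the neighborhood of t is exactly the image of bflip
lemma neighbors_eq (t : Fin m → Bool) :
    (Finset.univ.filter fun a => hammingDist t a = 1)
      = Finset.image (fun i => bflip i t) Finset.univ := by
  ext a
  simp only [Finset.mem_filter, Finset.mem_univ, true_and, Finset.mem_image]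
  constructor
  · intro ha
    rw [hammingDist_eq_card] at ha
    obtain ⟨i, hi⟩ := Finset.card_eq_one.mp ha
    refine ⟨i, ?_⟩
    have hmem : ∀ j, (t j ≠ a j) ↔ j = i := by
      intro j
      constructor
      · intro hj
        have : j ∈ (Finset.univ.filter fun k => t k ≠ a k) := by simp [hj]
        rw [hi] at this; simpa using this
      · intro hj; subst hj
        have : j ∈ ({j} : Finset (Fin m)) := by simp
        rw [← hi] at this; simpa using this
    funext j
    by_cases hj : j = i
    · subst hj
      have : t j ≠ a j := (hmem j).mpr rfl
      rw [bflip_apply_self]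
      revert this; cases t j <;> cases a j <;> simp
    · rw [bflip_apply_ne i j t hj]
      by_contra hc
      exact hj ((hmem j).mp hc)
  · rintro ⟨i, rfl⟩
    exact hammingDist_flip_self i t

lemma flip_injective (t : Fin m → Bool) : Function.Injective (fun i => bflip i t) := by
  intro i j hij
  by_contra h
  have h1 : bflip i t i = !t i := bflip_apply_self i t
  have h2 : bflip j t i = t i := bflip_apply_ne j i t h
  simp only at hij
  rw [hij] at h1
  rw [h1] at h2
  exact (Bool.not_ne_self (t i)) h2

lemma sum_neighbors (t : Fin m → Bool) (w : (Fin m → Bool) → ℝ) :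
    ∑ a ∈ Finset.univ.filter (fun a => hammingDist t a = 1), w a
      = ∑ i : Fin m, w (bflip i t) := by
  rw [neighbors_eq, Finset.sum_image (fun i _ j _ h => flip_injective t h)]

end hamm

section dist
open Finset
variable {m : ℕ} (hm : 3 ≤ m) (β : ℝ) (hβ : 0 < β) (y : Fin m → Bool)

noncomputable def Zc (β : ℝ) (y : Fin m → Bool) : ℝ :=
  ∑ z' ∈ Finset.univ.filter (fun z' : Fin m → Bool => z' ≠ y),
    Real.exp (-(hammingDist z' y : ℝ) / β)

noncomputable def wt (β : ℝ) (y : Fin m → Bool) (z : Fin m → Bool) : ℝ :=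
  if z = y then 0 else Real.exp (-(hammingDist z y : ℝ) / β) / Zc β y

lemma bflip_ne (i : Fin m) (y : Fin m → Bool) : bflip i y ≠ y := by
  intro h
  have := congrFun h i
  rw [bflip_apply_self] at this
  exact Bool.not_ne_self (y i) this

lemma Zc_pos (hm : 1 ≤ m) : 0 < Zc β y := by
  have hne : (Finset.univ.filter (fun z' : Fin m → Bool => z' ≠ y)).Nonempty := by
    refine ⟨bflip ⟨0, by omega⟩ y, ?_⟩
    simp [bflip_ne]
  exact Finset.sum_pos (fun z _ => Real.exp_pos _) hne

lemma wt_nonneg (hm : 1 ≤ m) (z : Fin m → Bool) : 0 ≤ wt β y z := by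
  unfold wt
  split
  · exact le_refl 0
  · exact le_of_lt (div_pos (Real.exp_pos _) (Zc_pos β y hm))

lemma wt_sum (hm : 1 ≤ m) : ∑ z, wt β y z = 1 := by
  have : ∀ z : Fin m → Bool, wt β y z
      = if z ≠ y then Real.exp (-(hammingDist z y : ℝ) / β) / Zc β y else 0 := by
    intro z; unfold wt
    by_cases h : z = y <;> simp [h]
  simp_rw [this]
  rw [← Finset.sum_filter, ← Finset.sum_div]
  rw [div_eq_one_iff_eq (ne_of_gt (Zc_pos β y hm))]
  rfl

lemma wt_le_p1 (hm : 1 ≤ m) (hβ : 0 < β) (z : Fin m → Bool) :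
    wt β y z ≤ Real.exp (-1 / β) / Zc β y := by
  have hZ := Zc_pos β y hm
  unfold wt
  split
  · exact div_nonneg (Real.exp_pos _).le hZ.le
  · rename_i h
    have hD : (1:ℝ) ≤ (hammingDist z y : ℝ) := by
      exact_mod_cast Nat.one_le_iff_ne_zero.mpr (hammingDist_ne_zero.mpr h)
    gcongr

lemma wt_bflip_y (hm : 1 ≤ m) (i : Fin m) :
    wt β y (bflip i y) = Real.exp (-1 / β) / Zc β y := by
  unfold wt
  rw [if_neg (bflip_ne i y), hammingDist_comm, hammingDist_flip_self]
  norm_num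

lemma wt_le_p2 (hm : 1 ≤ m) (hβ : 0 < β) (z : Fin m → Bool) (hz : hammingDist z y ≠ 1) :
    wt β y z ≤ Real.exp (-2 / β) / Zc β y := by
  have hZ0 := Zc_pos β y hm
  unfold wt
  split
  · exact div_nonneg (Real.exp_pos _).le hZ0.le
  · rename_i h
    have h2 : 2 ≤ hammingDist z y := by
      have : hammingDist z y ≠ 0 := hammingDist_ne_zero.mpr h
      omega
    have hZ := Zc_pos β y hm
    have hD : (2:ℝ) ≤ (hammingDist z y : ℝ) := by exact_mod_cast h2
    gcongr
lemma exists_bad_coord (hm3 : 3 ≤ m) (hβ : 0 < β) (t : Fin m → Bool) (ht : t ≠ y) :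
    ∃ i : Fin m, wt β y (bflip i t) ≤ Real.exp (-2 / β) / Zc β y := by
  have hm1 : 1 ≤ m := by omega
  have hr : 1 ≤ hammingDist t y :=
    Nat.one_le_iff_ne_zero.mpr (hammingDist_ne_zero.mpr ht)
  rcases eq_or_lt_of_le hr with h1 | h2
  · -- distance 1 : y itself is a neighbor of t
    have hy : y ∈ Finset.univ.filter (fun a => hammingDist t a = 1) := by
      simp [← h1]
    rw [neighbors_eq] at hy
    obtain ⟨i, _, hi⟩ := Finset.mem_image.mp hy
    refine ⟨i, ?_⟩
    rw [hi]
    unfold wt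
    rw [if_pos rfl]
    exact div_nonneg (Real.exp_pos _).le (Zc_pos β y hm1).le
  · by_cases hex : ∃ i, t i = y i
    · obtain ⟨i, hi⟩ := hex
      refine ⟨i, wt_le_p2 β y hm1 hβ _ ?_⟩
      rw [hammingDist_flip_eq_add i t y hi]
      omega
    · push_neg at hex
      have hall : (Finset.univ.filter fun j => t j ≠ y j) = (Finset.univ : Finset (Fin m)) := by
        ext j; simp [hex j]
      have hreq : hammingDist t y = m := by
        rw [hammingDist_eq_card, hall, Finset.card_univ, Fintype.card_fin]
      refine ⟨⟨0, by omega⟩, wt_le_p2 β y hm1 hβ _ ?_⟩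
      rw [hammingDist_flip_eq_sub _ t y (hex _), hreq]
      omega

lemma gap (hm3 : 3 ≤ m) (hβ : 0 < β) (t : Fin m → Bool) (ht : t ≠ y) :
    (Real.exp (-1 / β) - Real.exp (-2 / β)) / Zc β y
      ≤ ∑ i : Fin m, wt β y (bflip i y) - ∑ i : Fin m, wt β y (bflip i t) := by
  have hm1 : 1 ≤ m := by omega
  obtain ⟨i₀, hi₀⟩ := exists_bad_coord β y hm3 hβ t ht
  rw [← Finset.sum_sub_distrib]
  have hterm : ∀ i : Fin m, 0 ≤ wt β y (bflip i y) - wt β y (bflip i t) := by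
    intro i
    rw [wt_bflip_y β y hm1]
    linarith [wt_le_p1 β y hm1 hβ (bflip i t)]
  calc (Real.exp (-1 / β) - Real.exp (-2 / β)) / Zc β y
      ≤ wt β y (bflip i₀ y) - wt β y (bflip i₀ t) := by
        rw [wt_bflip_y β y hm1, sub_div]
        linarith
    _ ≤ ∑ i : Fin m, (wt β y (bflip i y) - wt β y (bflip i t)) :=
        Finset.single_le_sum (fun i _ => hterm i) (Finset.mem_univ i₀)

lemma delta_pos (hm1 : 1 ≤ m) (hβ : 0 < β) :
    0 < (Real.exp (-1 / β) - Real.exp (-2 / β)) / Zc β y := by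
  apply div_pos ?_ (Zc_pos β y hm1)
  have h : (-2 : ℝ) / β < -1 / β := by
    gcongr
    norm_num
  linarith [Real.exp_lt_exp.mpr h]

end dist



open Finset in
lemma logit_eq {d : ℕ} {τ : Type*} [Fintype τ] (WE : τ → Fin d → ℝ)
    (horth : ∀ t t' : τ, WE t ⬝ᵥ WE t' = if t = t' then (1:ℝ) else 0)
    (u : τ → Fin d → ℝ) (v : Fin d → ℝ) (t : τ) :
    WE t ⬝ᵥ (∑ s : τ, Matrix.vecMulVec (WE s) (u s)).mulVec v = u t ⬝ᵥ v := by
  have hrow : ∀ j, (∑ s : τ, Matrix.vecMulVec (WE s) (u s)).mulVec v j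
      = ∑ s : τ, WE s j * (u s ⬝ᵥ v) := by
    intro j
    simp only [Matrix.mulVec, dotProduct, Matrix.sum_apply,
      Matrix.vecMulVec_apply, Finset.sum_mul]
    rw [Finset.sum_comm]
    refine Finset.sum_congr rfl fun s _ => ?_
    rw [Finset.mul_sum]
    refine Finset.sum_congr rfl fun k _ => by ring
  calc WE t ⬝ᵥ (∑ s : τ, Matrix.vecMulVec (WE s) (u s)).mulVec v
      = ∑ j, WE t j * ((∑ s : τ, Matrix.vecMulVec (WE s) (u s)).mulVec v j) := rfl
    _ = ∑ j, WE t j * ∑ s : τ, WE s j * (u s ⬝ᵥ v) :=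
        Finset.sum_congr rfl fun j _ => by rw [hrow]
    _ = ∑ s : τ, (WE t ⬝ᵥ WE s) * (u s ⬝ᵥ v) := by
        simp_rw [Finset.mul_sum]
        rw [Finset.sum_comm]
        refine Finset.sum_congr rfl fun s _ => ?_
        simp only [dotProduct, Finset.sum_mul]
        exact Finset.sum_congr rfl fun j _ => by ring
    _ = u t ⬝ᵥ v := by
        simp_rw [horth, ite_mul, one_mul, zero_mul]
        rw [Finset.sum_ite_eq]
        simp


open Finset in
lemma sum_dotProduct' {n : ℕ} {ι : Type*} (s : Finset ι) (u : ι → Fin n → ℝ) (v : Fin n → ℝ) :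
    (∑ i ∈ s, u i) ⬝ᵥ v = ∑ i ∈ s, u i ⬝ᵥ v := by
  simp only [dotProduct, Finset.sum_apply, Finset.sum_mul]
  exact Finset.sum_comm

open Finset in
lemma dotProduct_sum' {n : ℕ} {ι : Type*} (s : Finset ι) (v : Fin n → ℝ) (u : ι → Fin n → ℝ) :
    v ⬝ᵥ (∑ i ∈ s, u i) = ∑ i ∈ s, v ⬝ᵥ u i := by
  simp only [dotProduct, Finset.sum_apply, Finset.mul_sum]
  exact Finset.sum_comm

/-- For `m ≥ 3`, tokens identified with binary vectors in `{0,1}^m`, `β > 0` and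
`0 < ε < 1`, there exist a dimension `d`, orthonormal embeddings `W_E(t) ∈ ℝ^d`, and a
threshold `L₀` such that, with the constructed value matrix
`W_V = Σ_t W_E(t)(Σ_{t'∈N1(t)} W_E(t')ᵀ)` and logits
`f_t(x) = W_E(t)ᵀ W_V ((1/L)Σ_l W_E(x_l))`, for every `L ≥ L₀` and every token `y`, the
probability over `x ~ π(·|y)^{⊗L}` (i.i.d. draws from the informative conditional
distribution) that `f_y(x)` fails to be the strict maximum of the logits is at most `ε`. -/
theorem stmt_0 (m : ℕ) (hm : 3 ≤ m) (β : ℝ) (hβ : 0 < β)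
    (ε : ℝ) (hε0 : 0 < ε) (hε1 : ε < 1) :
    ∃ (d : ℕ) (WE : (Fin m → Bool) → (Fin d → ℝ)) (L₀ : ℕ),
      (∀ t t' : Fin m → Bool, WE t ⬝ᵥ WE t' = if t = t' then (1 : ℝ) else 0) ∧
      ∀ L : ℕ, L₀ ≤ L → ∀ y : Fin m → Bool,
        let π : (Fin m → Bool) → ℝ := fun z =>
          if z = y then 0 else
            Real.exp (-(hammingDist z y : ℝ) / β) /
              ∑ z' ∈ Finset.univ.filter (fun z' : Fin m → Bool => z' ≠ y),
                Real.exp (-(hammingDist z' y : ℝ) / β)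
        let WV : Matrix (Fin d) (Fin d) ℝ :=
          ∑ t : Fin m → Bool, Matrix.vecMulVec (WE t)
            (∑ t' ∈ Finset.univ.filter
                (fun t' : Fin m → Bool => hammingDist t t' = 1), WE t')
        let f : (Fin m → Bool) → (Fin L → (Fin m → Bool)) → ℝ :=
          fun t x => WE t ⬝ᵥ WV.mulVec ((L : ℝ)⁻¹ • ∑ l : Fin L, WE (x l))
        ∑ x ∈ Finset.univ.filter
            (fun x : Fin L → (Fin m → Bool) => ∃ t, t ≠ y ∧ f y x ≤ f t x),
          ∏ l : Fin L, π (x l) ≤ ε := by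
  classical
  have hm1 : 1 ≤ m := by omega
  set e := Fintype.equivFin (Fin m → Bool) with he
  set d := Fintype.card (Fin m → Bool) with hd
  set WE : (Fin m → Bool) → Fin d → ℝ := fun t i => if e t = i then 1 else 0 with hWE
  have horth : ∀ t t' : Fin m → Bool, WE t ⬝ᵥ WE t' = if t = t' then (1:ℝ) else 0 := by
    intro t t'
    simp only [hWE, dotProduct, ite_mul, one_mul, zero_mul]
    rw [Finset.sum_ite_eq]
    simp [Equiv.apply_eq_iff_eq, eq_comm]
  set δf : (Fin m → Bool) → ℝ :=
    fun y => (Real.exp (-1 / β) - Real.exp (-2 / β)) / Zc β y with hδf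
  set N : (Fin m → Bool) → ℕ :=
    fun y => ⌈(4 * (Fintype.card (Fin m → Bool) : ℝ)) / (ε * δf y ^ 2)⌉₊ with hN
  refine ⟨d, WE, 1 + Finset.univ.sup N, horth, ?_⟩
  intro L hL y
  intro π WV f
  have hδ : 0 < δf y := delta_pos β y hm1 hβ
  have hL1 : 1 ≤ L := le_trans (Nat.le_add_right 1 _) hL
  have hLN : N y ≤ L :=
    le_trans (le_trans (Finset.le_sup (Finset.mem_univ y)) (Nat.le_add_left _ 1)) hL
  have hLpos : (0:ℝ) < L := by exact_mod_cast hL1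
  set ξ : (Fin m → Bool) → (Fin m → Bool) → ℝ :=
    fun t a => if hammingDist t a = 1 then 1 else 0 with hξ
  -- compute the logits
  have hf : ∀ t (x : Fin L → Fin m → Bool), f t x = (L:ℝ)⁻¹ * ∑ l, ξ t (x l) := by
    intro t x
    show WE t ⬝ᵥ (∑ s : Fin m → Bool, Matrix.vecMulVec (WE s)
        (∑ s' ∈ Finset.univ.filter (fun s' : Fin m → Bool => hammingDist s s' = 1), WE s')).mulVec
        ((L : ℝ)⁻¹ • ∑ l : Fin L, WE (x l)) = _
    have horth2 : ∀ a b : Fin m → Bool,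
        WE a ⬝ᵥ WE b = @ite ℝ (a = b) (Classical.propDecidable _) 1 0 := by
      intro a b
      rw [horth a b]
      congr
    rw [logit_eq WE horth2]
    rw [dotProduct_smul, smul_eq_mul]
    congr 1
    rw [dotProduct_sum']
    refine Finset.sum_congr rfl fun l _ => ?_
    rw [sum_dotProduct']
    simp_rw [horth]
    rw [Finset.sum_ite_eq' (Finset.univ.filter (fun s' : Fin m → Bool => hammingDist t s' = 1))
      (x l) (fun _ => (1:ℝ))]
    simp [hξ]
  -- event characterization
  have hev : ∀ t (x : Fin L → Fin m → Bool),
      (f y x ≤ f t x) ↔ (∑ l, (ξ y (x l) - ξ t (x l)) ≤ 0) := by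
    intro t x
    rw [hf, hf, Finset.sum_sub_distrib, sub_nonpos]
    exact mul_le_mul_iff_right₀ (by positivity)
  have hw0 := wt_nonneg β y hm1
  have hw1 := wt_sum β y hm1
  have hπ : ∀ z, π z = wt β y z := fun z => rfl
  -- mean computation
  have hsplit : ∀ s : Fin m → Bool, ∑ a, wt β y a * ξ s a = ∑ i : Fin m, wt β y (bflip i s) := by
    intro s
    rw [← sum_neighbors s (wt β y), Finset.sum_filter]
    refine Finset.sum_congr rfl fun a _ => ?_
    simp only [hξ, mul_ite, mul_one, mul_zero]
  have hmean : ∀ t : Fin m → Bool, t ≠ y →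
      δf y ≤ ∑ a, wt β y a * (ξ y a - ξ t a) := by
    intro t ht
    have : ∑ a, wt β y a * (ξ y a - ξ t a)
        = (∑ a, wt β y a * ξ y a) - ∑ a, wt β y a * ξ t a := by
      simp_rw [mul_sub]
      exact Finset.sum_sub_distrib _ _
    rw [this, hsplit, hsplit]
    exact gap β y hm hβ t ht
  -- per-token Chebyshev bound
  have hcheb : ∀ t : Fin m → Bool, t ≠ y →
      ∑ x ∈ Finset.univ.filter
          (fun x : Fin L → Fin m → Bool => ∑ l, (ξ y (x l) - ξ t (x l)) ≤ 0),
        ∏ l, wt β y (x l) ≤ 4 / (L * δf y ^ 2) := by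
    intro t ht
    refine cheby (wt β y) (fun a => ξ y a - ξ t a) hw0 hw1 ?_ (δf y) hδ (hmean t ht) hL1
    intro a
    simp only [hξ]
    split_ifs <;> norm_num
  set T : Finset (Fin m → Bool) := Finset.univ.filter (fun t => t ≠ y) with hT
  have hnn : ∀ (t : Fin m → Bool) (x : Fin L → Fin m → Bool),
      (0:ℝ) ≤ if ∑ l, (ξ y (x l) - ξ t (x l)) ≤ 0 then ∏ l, wt β y (x l) else 0 := by
    intro t x
    split
    · exact Finset.prod_nonneg fun l _ => hw0 _
    · exact le_refl 0
  calc ∑ x ∈ Finset.univ.filter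
          (fun x : Fin L → (Fin m → Bool) => ∃ t, t ≠ y ∧ f y x ≤ f t x),
        ∏ l : Fin L, π (x l)
      ≤ ∑ x ∈ Finset.univ.filter
          (fun x : Fin L → (Fin m → Bool) => ∃ t, t ≠ y ∧ f y x ≤ f t x),
        ∑ t ∈ T, (if ∑ l, (ξ y (x l) - ξ t (x l)) ≤ 0 then ∏ l, wt β y (x l) else 0) := by
        refine Finset.sum_le_sum fun x hx => ?_
        obtain ⟨t, ht, hle⟩ := (Finset.mem_filter.mp hx).2
        have hx0 : ∑ l, (ξ y (x l) - ξ t (x l)) ≤ 0 := (hev t x).mp hle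
        have : ∏ l : Fin L, π (x l)
            = if ∑ l, (ξ y (x l) - ξ t (x l)) ≤ 0 then ∏ l, wt β y (x l) else 0 := by
          rw [if_pos hx0]
          exact Finset.prod_congr rfl fun l _ => hπ _
        rw [this]
        exact Finset.single_le_sum (fun t' _ => hnn t' x)
          (Finset.mem_filter.mpr ⟨Finset.mem_univ t, ht⟩)
    _ ≤ ∑ x : Fin L → (Fin m → Bool),
        ∑ t ∈ T, (if ∑ l, (ξ y (x l) - ξ t (x l)) ≤ 0 then ∏ l, wt β y (x l) else 0) :=
        Finset.sum_le_sum_of_subset_of_nonneg (Finset.filter_subset _ _)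
          (fun x _ _ => Finset.sum_nonneg fun t _ => hnn t x)
    _ = ∑ t ∈ T, ∑ x ∈ Finset.univ.filter
          (fun x : Fin L → Fin m → Bool => ∑ l, (ξ y (x l) - ξ t (x l)) ≤ 0),
        ∏ l, wt β y (x l) := by
        rw [Finset.sum_comm]
        exact Finset.sum_congr rfl fun t _ => (Finset.sum_filter _ _).symm
    _ ≤ ∑ t ∈ T, 4 / (L * δf y ^ 2) :=
        Finset.sum_le_sum fun t ht => hcheb t (Finset.mem_filter.mp ht).2
    _ = T.card * (4 / (L * δf y ^ 2)) := by rw [Finset.sum_const, nsmul_eq_mul]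
    _ ≤ ε := by
        have hCle : (T.card : ℝ) ≤ (Fintype.card (Fin m → Bool) : ℝ) := by
          exact_mod_cast Finset.card_filter_le _ _
        have hx : (4 * (Fintype.card (Fin m → Bool) : ℝ)) / (ε * δf y ^ 2) ≤ (L:ℝ) := by
          rw [hN] at hLN
          exact le_trans (Nat.le_ceil _) (Nat.cast_le.mpr hLN)
        have hεδ : (0:ℝ) < ε * δf y ^ 2 := by positivity
        have h4C : 4 * (Fintype.card (Fin m → Bool) : ℝ) ≤ (L:ℝ) * (ε * δf y ^ 2) :=
          (div_le_iff₀ hεδ).mp hx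
        have hLδ : (0:ℝ) < (L:ℝ) * δf y ^ 2 := by positivity
        have hfrac : 4 / ((L:ℝ) * δf y ^ 2) ≤ ε / (Fintype.card (Fin m → Bool) : ℝ) := by
          rw [div_le_div_iff₀ hLδ (by positivity)]
          nlinarith
        calc (T.card : ℝ) * (4 / (L * δf y ^ 2))
            ≤ (Fintype.card (Fin m → Bool) : ℝ) * (ε / (Fintype.card (Fin m → Bool) : ℝ)) := by
              refine mul_le_mul hCle hfrac (by positivity) (by positivity)
          _ = ε := by
              field_simp
end

section
/- Let m ≥ 3, β > 0, and let y ≠ ỹ be two binary vectors in {0,1}^m. Define p(i) = exp(−D_H(i,y)/β)/Z_y for i ≠ y, where Z_y = Σ_{i≠y} exp(−D_H(i,y)/β). Then Σ_{i ∈ N1(y)} p(i) − Σ_{i ∈ N1(ỹ), i ≠ y} p(i) ≥ (exp(−1/β) − exp(−2/β))/Z_y. -/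
open Finset

lemma bool_ne_iff' {a b : Bool} (h : a ≠ b) : a = !b := by cases a <;> cases b <;> simp_all

lemma dist_upd {m : ℕ} (v : Fin m → Bool) (j : Fin m) :
    hammingDist v (Function.update v j (!v j)) = 1 := by
  unfold hammingDist
  have h : (Finset.univ.filter fun k => v k ≠ Function.update v j (!v j) k) = {j} := by
    ext k
    rcases eq_or_ne k j with rfl | hk
    · simp
    · simp [Function.update_of_ne hk, hk]
  rw [h]; simp

lemma hdist_one {m : ℕ} {v i : Fin m → Bool} (h : hammingDist v i = 1) :
    ∃ j, i = Function.update v j (!v j) := by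
  unfold hammingDist at h
  obtain ⟨j, hj⟩ := Finset.card_eq_one.mp h
  refine ⟨j, funext fun k => ?_⟩
  rcases eq_or_ne k j with rfl | hk
  · have hjm : k ∈ Finset.univ.filter fun l => v l ≠ i l := by rw [hj]; simp
    have : v k ≠ i k := (Finset.mem_filter.mp hjm).2
    simp [Function.update_self, bool_ne_iff' this.symm]
  · have hjm : k ∉ Finset.univ.filter fun l => v l ≠ i l := by rw [hj]; simp [hk]
    have : v k = i k := by by_contra hc; exact hjm (Finset.mem_filter.mpr ⟨Finset.mem_univ _, hc⟩)
    simp [Function.update_of_ne hk, this]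

lemma upd_inj {m : ℕ} (v : Fin m → Bool) :
    Function.Injective (fun j : Fin m => Function.update v j (!v j)) := by
  intro j k h
  by_contra hjk
  have h2 := congrFun h j
  simp only [Function.update_self, Function.update_of_ne hjk] at h2
  exact Bool.not_ne_self (v j) h2

lemma sphere_eq {m : ℕ} (v : Fin m → Bool) :
    Finset.univ.filter (fun i : Fin m → Bool => hammingDist v i = 1)
      = Finset.univ.image (fun j : Fin m => Function.update v j (!v j)) := by
  ext i
  simp only [Finset.mem_filter, Finset.mem_image, Finset.mem_univ, true_and]
  constructor
  · intro h; obtain ⟨j, rfl⟩ := hdist_one h; exact ⟨j, rfl⟩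
  · rintro ⟨j, rfl⟩; exact dist_upd v j

lemma sphere_card {m : ℕ} (v : Fin m → Bool) :
    (Finset.univ.filter (fun i : Fin m → Bool => hammingDist v i = 1)).card = m := by
  rw [sphere_eq, Finset.card_image_of_injective _ (upd_inj v), Finset.card_univ,
    Fintype.card_fin]



/-- For `m ≥ 3`, `β > 0` and distinct binary vectors `y ≠ ỹ` in `{0,1}^m`, with
`p(i) = exp(−D_H(i,y)/β)/Z_y` for `i ≠ y` (where `Z_y = Σ_{i≠y} exp(−D_H(i,y)/β)`), one has
`Σ_{i ∈ N1(y)} p(i) − Σ_{i ∈ N1(ỹ), i ≠ y} p(i) ≥ (exp(−1/β) − exp(−2/β))/Z_y`. -/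
theorem stmt_1 (m : ℕ) (hm : 3 ≤ m) (β : ℝ) (hβ : 0 < β)
    (y ytil : Fin m → Bool) (hne : y ≠ ytil) :
    let Z : ℝ := ∑ i ∈ Finset.univ.filter (fun i : Fin m → Bool => i ≠ y),
      Real.exp (-(hammingDist i y : ℝ) / β)
    let p : (Fin m → Bool) → ℝ := fun i => Real.exp (-(hammingDist i y : ℝ) / β) / Z
    (Real.exp (-1 / β) - Real.exp (-2 / β)) / Z ≤
      (∑ i ∈ Finset.univ.filter (fun i : Fin m → Bool => hammingDist y i = 1), p i)
      - ∑ i ∈ Finset.univ.filter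
          (fun i : Fin m → Bool => hammingDist ytil i = 1 ∧ i ≠ y), p i := by
  intro Z p
  set a : ℝ := Real.exp (-1 / β) with ha
  set b : ℝ := Real.exp (-2 / β) with hb
  have hba : b ≤ a := Real.exp_le_exp.mpr (by
    rw [div_le_div_iff_of_pos_right hβ]; norm_num)
  have hb0 : 0 < b := Real.exp_pos _
  have hZ : 0 < Z := by
    apply Finset.sum_pos (fun i _ => Real.exp_pos _)
    exact ⟨ytil, Finset.mem_filter.mpr ⟨Finset.mem_univ _, Ne.symm hne⟩⟩
  set f : (Fin m → Bool) → ℝ := fun i => Real.exp (-(hammingDist i y : ℝ) / β) with hf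
  -- first sum
  have hS1 : (∑ i ∈ Finset.univ.filter (fun i : Fin m → Bool => hammingDist y i = 1), f i)
      = m * a := by
    rw [Finset.sum_congr rfl (fun i hi => ?_), Finset.sum_const, sphere_card y, nsmul_eq_mul]
    have h1 : hammingDist i y = 1 := by
      rw [hammingDist_comm]; exact (Finset.mem_filter.mp hi).2
    simp [hf, h1, ha]
  -- second sum setup
  set T := Finset.univ.filter (fun i : Fin m → Bool => hammingDist ytil i = 1 ∧ i ≠ y) with hT
  set T1 := T.filter (fun i => hammingDist i y = 1) with hT1
  set T2 := T.filter (fun i => ¬ hammingDist i y = 1) with hT2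
  have hsplit : (∑ i ∈ T, f i) = (∑ i ∈ T1, f i) + ∑ i ∈ T2, f i :=
    (Finset.sum_filter_add_sum_filter_not T _ f).symm
  have hT1a : (∑ i ∈ T1, f i) ≤ T1.card * a := by
    rw [← nsmul_eq_mul]
    apply Finset.sum_le_card_nsmul
    intro i hi
    have h1 : hammingDist i y = 1 := (Finset.mem_filter.mp hi).2
    simp [hf, h1, ha]
  have hT2b : (∑ i ∈ T2, f i) ≤ T2.card * b := by
    rw [← nsmul_eq_mul]
    apply Finset.sum_le_card_nsmul
    intro i hi
    obtain ⟨hiT, hnot1⟩ := Finset.mem_filter.mp hi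
    have hiy : i ≠ y := (Finset.mem_filter.mp hiT).2.2
    have hd0 : hammingDist i y ≠ 0 := fun h => hiy (hammingDist_eq_zero.mp h)
    have hd2 : 2 ≤ hammingDist i y := by omega
    have : (-(hammingDist i y : ℝ)) / β ≤ -2 / β := by
      rw [div_le_div_iff_of_pos_right hβ]
      have : (2:ℝ) ≤ (hammingDist i y : ℝ) := by exact_mod_cast hd2
      linarith
    exact Real.exp_le_exp.mpr this
  -- card bounds
  have hTcard : T.card ≤ m := by
    have hsub : T ⊆ Finset.univ.filter (fun i : Fin m → Bool => hammingDist ytil i = 1) := by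
      intro i hi
      obtain ⟨_, h1, _⟩ := Finset.mem_filter.mp hi
      exact Finset.mem_filter.mpr ⟨Finset.mem_univ _, h1⟩
    calc T.card ≤ _ := Finset.card_le_card hsub
      _ = m := sphere_card ytil
  have hT1card : T1.card ≤ 2 := by
    rcases Finset.eq_empty_or_nonempty T1 with he | ⟨i0, hi0⟩
    · simp [he]
    · obtain ⟨hi0T, hi0y⟩ := Finset.mem_filter.mp hi0
      obtain ⟨_, hi0til, _⟩ := Finset.mem_filter.mp hi0T
      have hdy : hammingDist y ytil ≤ 2 := by
        calc hammingDist y ytil ≤ hammingDist y i0 + hammingDist i0 ytil :=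
              hammingDist_triangle y i0 ytil
          _ = 2 := by rw [hammingDist_comm y i0, hammingDist_comm i0 ytil, hi0y, hi0til]
      set D := Finset.univ.filter (fun j : Fin m => y j ≠ ytil j) with hD
      have hDcard : D.card ≤ 2 := hdy
      have hsub : T1 ⊆ D.image (fun j => Function.update ytil j (!ytil j)) := by
        intro i hi
        obtain ⟨hiT, hiy1⟩ := Finset.mem_filter.mp hi
        obtain ⟨_, hitil, hiney⟩ := Finset.mem_filter.mp hiT
        obtain ⟨j, rfl⟩ := hdist_one hitil
        refine Finset.mem_image.mpr ⟨j, ?_, rfl⟩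
        refine Finset.mem_filter.mpr ⟨Finset.mem_univ _, fun hyj => ?_⟩
        -- y j = ytil j leads to y = ytil
        obtain ⟨k, hk⟩ := hdist_one ((hammingDist_comm _ _).trans hiy1 : hammingDist y _ = 1)
        have hjk : j = k := by
          by_contra hjk
          have := congrFun hk j
          rw [Function.update_self, Function.update_of_ne hjk, ← hyj] at this
          exact Bool.not_ne_self (y j) this
        subst hjk
        apply hne
        funext l
        rcases eq_or_ne l j with rfl | hl
        · exact hyj
        · have := congrFun hk l
          rw [Function.update_of_ne hl, Function.update_of_ne hl] at this
          exact this.symm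
      calc T1.card ≤ _ := Finset.card_le_card hsub
        _ ≤ D.card := Finset.card_image_le
        _ ≤ 2 := hDcard
  have hT12 : T1.card + T2.card = T.card := Finset.card_filter_add_card_filter_not _
  -- assemble
  have hcore : a - b ≤ (∑ i ∈ Finset.univ.filter
      (fun i : Fin m → Bool => hammingDist y i = 1), f i) - ∑ i ∈ T, f i := by
    rw [hS1, hsplit]
    have h1 : (T1.card : ℝ) ≤ 2 := by exact_mod_cast hT1card
    have h2 : (T1.card : ℝ) + (T2.card : ℝ) ≤ (m : ℝ) := by
      exact_mod_cast hT12 ▸ hTcard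
    have h3 : (3:ℝ) ≤ (m:ℝ) := by exact_mod_cast hm
    nlinarith [mul_nonneg (sub_nonneg.mpr hba) (sub_nonneg.mpr h1),
      mul_nonneg hb0.le (sub_nonneg.mpr h2), hb0.le,
      mul_le_mul_of_nonneg_left hba (Nat.cast_nonneg T2.card),
      mul_le_mul_of_nonneg_left hba (Nat.cast_nonneg T1.card)]
  have hp : ∀ s : Finset (Fin m → Bool), (∑ i ∈ s, p i) = (∑ i ∈ s, f i) / Z := by
    intro s; rw [Finset.sum_div]
  rw [hp, hp, div_sub_div_same]
  gcongr
end

section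
/- Let m ≥ 3, let tokens be identified with binary vectors in {0,1}^m, and suppose the embeddings {W_E(t)} ⊂ ℝ^d form an orthonormal family. Let W_V = Σ_t W_E(t)(Σ_{t'∈N1(t)} W_E(t')ᵀ) be the constructed value matrix. Fix a token y and a context x = (x_1,…,x_L) all of whose tokens lie in N1(y); let α_i = (1/L)·#{l : x_l = i} and f_t(x) = W_E(t)ᵀ W_V ((1/L)Σ_{l=1}^L W_E(x_l)). Then for every token ỹ ≠ y, f_y(x) − f_ỹ(x) = 1 − Σ_{i ∈ N1(ỹ)} α_i ≥ 0; in particular f_y(x) is a maximum of the logits. -/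
open Matrix

private lemma dot_vecMulVec_mulVec {d : ℕ} (u a b w : Fin d → ℝ) :
    u ⬝ᵥ (Matrix.vecMulVec a b).mulVec w = (u ⬝ᵥ a) * (b ⬝ᵥ w) := by
  simp only [dotProduct, mulVec, vecMulVec_apply, Finset.mul_sum, Finset.sum_mul]
  rw [Finset.sum_comm]
  exact Finset.sum_congr rfl fun j _ => Finset.sum_congr rfl fun k _ => by ring

private lemma sum_mulVec' {d : ℕ} {ι : Type*} (s : Finset ι)
    (M : ι → Matrix (Fin d) (Fin d) ℝ) (w : Fin d → ℝ) :
    (∑ t ∈ s, M t).mulVec w = ∑ t ∈ s, (M t).mulVec w := by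
  induction s using Finset.cons_induction with
  | empty => simp [Matrix.zero_mulVec]
  | cons a s ha ih => simp [Finset.sum_cons, Matrix.add_mulVec, ih]

private lemma sum_dot' {d : ℕ} {ι : Type*} (s : Finset ι) (u : Fin d → ℝ)
    (v : ι → Fin d → ℝ) : (∑ t ∈ s, v t) ⬝ᵥ u = ∑ t ∈ s, v t ⬝ᵥ u := by
  simp only [dotProduct, Finset.sum_apply, Finset.sum_mul]
  exact Finset.sum_comm

private lemma dot_sum' {d : ℕ} {ι : Type*} (s : Finset ι) (u : Fin d → ℝ)
    (v : ι → Fin d → ℝ) : u ⬝ᵥ (∑ t ∈ s, v t) = ∑ t ∈ s, u ⬝ᵥ v t := by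
  simp only [dotProduct, Finset.sum_apply, Finset.mul_sum]
  exact Finset.sum_comm

/-- With orthonormal embeddings `W_E(t) ∈ ℝ^d` indexed by binary vectors in
`{0,1}^m` (`m ≥ 3`), the constructed value matrix `W_V = Σ_t W_E(t)(Σ_{t'∈N1(t)} W_E(t')ᵀ)`,
a token `y`, and a context `x = (x_1,…,x_L)` all of whose tokens lie in `N1(y)`, the logits
`f_t(x) = W_E(t)ᵀ W_V ((1/L)Σ_l W_E(x_l))` satisfy, for every `ỹ ≠ y`,
`f_y(x) − f_ỹ(x) = 1 − Σ_{i ∈ N1(ỹ)} α_i ≥ 0` where `α_i = (1/L)·#{l : x_l = i}`;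
in particular `f_y(x)` is a maximum of the logits. -/
theorem stmt_2 (m d : ℕ) (hm : 3 ≤ m)
    (WE : (Fin m → Bool) → (Fin d → ℝ))
    (horth : ∀ t t', WE t ⬝ᵥ WE t' = if t = t' then (1 : ℝ) else 0)
    (L : ℕ) (hL : 0 < L) (y : Fin m → Bool)
    (x : Fin L → (Fin m → Bool)) (hx : ∀ l, hammingDist (x l) y = 1) :
    let α : (Fin m → Bool) → ℝ :=
      fun i => ((Finset.univ.filter (fun l : Fin L => x l = i)).card : ℝ) / L
    let WV : Matrix (Fin d) (Fin d) ℝ :=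
      ∑ t : Fin m → Bool, Matrix.vecMulVec (WE t)
        (∑ t' ∈ Finset.univ.filter (fun t' : Fin m → Bool => hammingDist t t' = 1), WE t')
    let f : (Fin m → Bool) → ℝ :=
      fun t => WE t ⬝ᵥ WV.mulVec ((L : ℝ)⁻¹ • ∑ l : Fin L, WE (x l))
    (∀ ytil : Fin m → Bool, ytil ≠ y →
      f y - f ytil
        = 1 - ∑ i ∈ Finset.univ.filter (fun i : Fin m → Bool => hammingDist ytil i = 1), α i
      ∧ 0 ≤ f y - f ytil) ∧
    (∀ t : Fin m → Bool, f t ≤ f y) := by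
  intro α WV f
  have hLne : (L : ℝ) ≠ 0 := Nat.cast_ne_zero.mpr hL.ne'
  -- α as an indicator sum
  have hαind : ∀ i, α i = (L : ℝ)⁻¹ * ∑ l : Fin L, (if x l = i then (1 : ℝ) else 0) := by
    intro i
    have : (∑ l : Fin L, (if x l = i then (1 : ℝ) else 0))
        = ((Finset.univ.filter (fun l : Fin L => x l = i)).card : ℝ) := by
      rw [Finset.sum_boole]
    rw [this]
    simp [α, div_eq_inv_mul]
  have hαnn : ∀ i, 0 ≤ α i := by
    intro i
    exact div_nonneg (Nat.cast_nonneg _) (Nat.cast_nonneg _)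
  -- dot product of any embedding with the attention output equals α
  have hdot : ∀ i, WE i ⬝ᵥ ((L : ℝ)⁻¹ • ∑ l : Fin L, WE (x l)) = α i := by
    intro i
    rw [dotProduct_smul, dot_sum', hαind]
    simp only [smul_eq_mul]
    congr 1
    refine Finset.sum_congr rfl fun l _ => ?_
    rw [horth]
    simp [eq_comm]
  -- the logit formula : f s = ∑_{i ∈ N1(s)} α i
  have hf : ∀ s, f s = ∑ i ∈ Finset.univ.filter
      (fun i : Fin m → Bool => hammingDist s i = 1), α i := by
    intro s
    show WE s ⬝ᵥ WV.mulVec _ = _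
    rw [show WV = ∑ t : Fin m → Bool, Matrix.vecMulVec (WE t)
        (∑ t' ∈ Finset.univ.filter (fun t' : Fin m → Bool => hammingDist t t' = 1), WE t')
      from rfl, sum_mulVec', dot_sum']
    have : ∀ t : Fin m → Bool, WE s ⬝ᵥ (Matrix.vecMulVec (WE t)
        (∑ t' ∈ Finset.univ.filter (fun t' : Fin m → Bool => hammingDist t t' = 1), WE t')).mulVec
          ((L : ℝ)⁻¹ • ∑ l : Fin L, WE (x l))
        = (if s = t then (1:ℝ) else 0) *
          ∑ i ∈ Finset.univ.filter (fun i : Fin m → Bool => hammingDist t i = 1), α i := by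
      intro t
      rw [dot_vecMulVec_mulVec, horth, sum_dot']
      congr 1
      exact Finset.sum_congr rfl fun i _ => hdot i
    rw [Finset.sum_congr rfl fun t _ => this t]
    simp only [ite_mul, zero_mul, one_mul]
    rw [Finset.sum_ite_eq]
    simp
  -- sums of α over any set containing all context tokens equal 1
  have hsum : ∀ S : Finset (Fin m → Bool), (∀ l, x l ∈ S) → ∑ i ∈ S, α i = 1 := by
    intro S hS
    have : ∑ i ∈ S, α i = (L : ℝ)⁻¹ * ∑ i ∈ S, ∑ l : Fin L, (if x l = i then (1:ℝ) else 0) := by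
      rw [Finset.mul_sum]
      exact Finset.sum_congr rfl fun i _ => hαind i
    rw [this, Finset.sum_comm]
    have : ∀ l : Fin L, (∑ i ∈ S, if x l = i then (1:ℝ) else 0) = 1 := by
      intro l
      rw [Finset.sum_ite_eq]
      simp [hS l]
    rw [Finset.sum_congr rfl fun l _ => this l]
    simp [hLne]
  -- f y = 1
  have hfy : f y = 1 := by
    rw [hf]
    exact hsum _ fun l => by
      simp [Finset.mem_filter, hammingDist_comm y (x l), hx l]
  -- any logit is at most 1
  have hle : ∀ t, f t ≤ 1 := by
    intro t
    rw [hf]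
    calc ∑ i ∈ Finset.univ.filter (fun i : Fin m → Bool => hammingDist t i = 1), α i
        ≤ ∑ i : Fin m → Bool, α i :=
          Finset.sum_le_sum_of_subset_of_nonneg (Finset.filter_subset _ _)
            (fun i _ _ => hαnn i)
      _ = 1 := hsum _ fun l => Finset.mem_univ _
  constructor
  · intro ytil _
    constructor
    · rw [hfy, hf ytil]
    · rw [hfy]
      linarith [hle ytil]
  · intro t
    rw [hfy]
    exact hle t
end

section
/- Let m ≥ 1 and let W_E ∈ ℝ^{d × 2^m} be a matrix whose columns W_E(t) are indexed by the binary vectors t ∈ {0,1}^m. Suppose there exist a, b ∈ ℝ such that for all tokens t, t' (including t = t'), ⟨W_E(t), W_E(t')⟩ = −a·D_H(t,t') + b. Then rank(W_E) ≤ m + 2. -/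
open Matrix

lemma matrix_rank_add_le {k n : Type*} [Fintype k] [Fintype n] [DecidableEq n]
    (A B : Matrix k n ℝ) : (A + B).rank ≤ A.rank + B.rank := by
  classical
  have hle : LinearMap.range (A + B).mulVecLin ≤
      LinearMap.range A.mulVecLin ⊔ LinearMap.range B.mulVecLin := by
    rintro x ⟨v, rfl⟩
    rw [mulVecLin_add]
    exact Submodule.add_mem_sup ⟨v, rfl⟩ ⟨v, rfl⟩
  calc (A + B).rank ≤ Module.finrank ℝ
        ↥(LinearMap.range A.mulVecLin ⊔ LinearMap.range B.mulVecLin) :=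
        Submodule.finrank_mono hle
    _ ≤ A.rank + B.rank := Submodule.finrank_add_le_finrank_add_finrank _ _

lemma hamming_eval {m : ℕ} (t t' : Fin m → Bool) :
    (hammingDist t t' : ℝ) =
      ∑ i : Fin m, ((if t i then (1:ℝ) else 0) + (if t' i then 1 else 0)
        - 2 * ((if t i then (1:ℝ) else 0) * (if t' i then 1 else 0))) := by
  classical
  rw [hammingDist, Finset.card_filter]
  push_cast
  refine Finset.sum_congr rfl fun i _ => ?_
  cases t i <;> cases t' i <;> norm_num

/-- If the columns `W_E(t)` of `W_E ∈ ℝ^{d × 2^m}`, indexed by binary vectors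
`t ∈ {0,1}^m`, satisfy `⟨W_E(t), W_E(t')⟩ = −a·D_H(t,t') + b` for all tokens `t, t'`
(including `t = t'`), then `rank(W_E) ≤ m + 2`. -/
theorem stmt_7 (m d : ℕ) (hm : 1 ≤ m) (a b : ℝ)
    (WE : Matrix (Fin d) (Fin m → Bool) ℝ)
    (h : ∀ t t' : Fin m → Bool,
      (fun i => WE i t) ⬝ᵥ (fun i => WE i t') = -a * (hammingDist t t' : ℝ) + b) :
    WE.rank ≤ m + 2 := by
  classical
  set T : Matrix (Fin m) (Fin m → Bool) ℝ := fun i t => if t i then 1 else 0 with hT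
  set s : (Fin m → Bool) → ℝ := fun t => ∑ i, (if t i then (1:ℝ) else 0) with hs
  set U : Matrix (Fin m → Bool) (Fin 1) ℝ := fun t _ => -a * s t + b with hU
  set V : Matrix (Fin 1) (Fin m → Bool) ℝ := fun _ _ => 1 with hV
  set U' : Matrix (Fin m → Bool) (Fin 1) ℝ := fun _ _ => 1 with hU'
  set V' : Matrix (Fin 1) (Fin m → Bool) ℝ := fun _ t' => -a * s t' with hV'
  have key : WEᵀ * WE = U * V + U' * V' + Tᵀ * ((2 * a) • T) := by
    ext t t'
    have := h t t'
    simp only [Matrix.add_apply, Matrix.mul_apply, Fin.sum_univ_one,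
      Matrix.transpose_apply, Matrix.smul_apply, smul_eq_mul]
    have hd : (WEᵀ * WE) t t' = -a * (hammingDist t t' : ℝ) + b := by
      rw [Matrix.mul_apply]
      simpa [dotProduct, Matrix.transpose_apply] using this
    rw [Matrix.mul_apply] at hd
    simp only [Matrix.transpose_apply] at hd
    rw [hd, hamming_eval t t']
    simp only [hU, hV, hU', hV', hs, hT]
    rw [Finset.mul_sum]
    simp only [mul_sub, mul_add]
    rw [Finset.sum_sub_distrib, Finset.sum_add_distrib]
    ring_nf
    rw [Finset.sum_neg_distrib, Finset.sum_neg_distrib]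
    have hflip : ∑ x : Fin m, (-(a * 2) * if t x = true then (1:ℝ) else 0) *
        (if t' x = true then (1:ℝ) else 0)
        = -∑ x : Fin m, (if t x = true then (1:ℝ) else 0) * a * 2 *
          (if t' x = true then (1:ℝ) else 0) := by
      rw [← Finset.sum_neg_distrib]
      exact Finset.sum_congr rfl fun x _ => by ring
    rw [Finset.sum_neg_distrib, Finset.mul_sum, Finset.mul_sum]
    ring
  have h1 : WE.rank = (WEᵀ * WE).rank := (Matrix.rank_transpose_mul_self WE).symm
  rw [h1, key]
  calc (U * V + U' * V' + Tᵀ * ((2 * a) • T)).rank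
      ≤ (U * V + U' * V').rank + (Tᵀ * ((2 * a) • T)).rank := matrix_rank_add_le _ _
    _ ≤ ((U * V).rank + (U' * V').rank) + (Tᵀ * ((2 * a) • T)).rank := by
        exact Nat.add_le_add_right (matrix_rank_add_le _ _) _
    _ ≤ (1 + 1) + m := by
        gcongr
        · exact (Matrix.rank_mul_le_right U V).trans
            ((Matrix.rank_le_card_height V).trans (by simp))
        · exact (Matrix.rank_mul_le_right U' V').trans
            ((Matrix.rank_le_card_height V').trans (by simp))
        · exact (Matrix.rank_mul_le_right _ _).trans
            ((Matrix.rank_le_card_height _).trans (by simp))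
    _ = m + 2 := by ring
end

section
/- Let m ≥ 1 and let D ∈ ℝ^{2^m × 2^m} be the matrix indexed by binary vectors in {0,1}^m whose (i,j) entry is the Hamming distance D_H(i,j). Then rank(D) ≤ m + 1. -/
/-- For `m ≥ 1`, the `2^m × 2^m` matrix `D` indexed by binary vectors in
`{0,1}^m`, whose `(i,j)` entry is the Hamming distance `D_H(i,j)`, has rank at most `m + 1`. -/
theorem stmt_8 (m : ℕ) (hm : 1 ≤ m) :
    (Matrix.of (fun i j : Fin m → Bool => (hammingDist i j : ℝ))).rank ≤ m + 1 := by
  set ind : Bool → ℝ := fun b => if b then 1 else 0 with hind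
  set B : Matrix (Fin m → Bool) (Fin m ⊕ Unit) ℝ :=
    Matrix.of (fun i k => Sum.elim (fun k => ind (i k)) (fun _ => 1) k) with hB
  set C : Matrix (Fin m ⊕ Unit) (Fin m → Bool) ℝ :=
    Matrix.of (fun k j => Sum.elim (fun k => 1 - 2 * ind (j k))
      (fun _ => ∑ k, ind (j k)) k) with hC
  have hfact : (Matrix.of (fun i j : Fin m → Bool => (hammingDist i j : ℝ))) = B * C := by
    ext i j
    simp only [Matrix.mul_apply, Matrix.of_apply, hB, hC, Fintype.sum_sum_type,
      Sum.elim_inl, Sum.elim_inr]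
    have hham : (hammingDist i j : ℝ) = ∑ k, if i k ≠ j k then (1:ℝ) else 0 := by
      rw [hammingDist, ← Finset.sum_boole]
    have hu : ∑ _ : Unit, (∑ k, ind (j k)) = ∑ k, ind (j k) := by simp
    simp only [one_mul]
    rw [hham, hu, ← Finset.sum_add_distrib]
    apply Finset.sum_congr rfl
    intro k _
    cases hik : i k <;> cases hjk : j k <;> simp [hind] <;> norm_num
  rw [hfact]
  calc (B * C).rank ≤ B.rank := Matrix.rank_mul_le_left B C
    _ ≤ Fintype.card (Fin m ⊕ Unit) := Matrix.rank_le_card_width B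
    _ = m + 1 := by simp
end

section
/- Let m ≥ 2 and suppose the embeddings W_E(t) ∈ ℝ^d, indexed by binary vectors t ∈ {0,1}^m, satisfy the embedding geometry ⟨W_E(t), W_E(t)⟩ = b₀ for all t and ⟨W_E(t), W_E(t')⟩ = −a·D_H(t,t') + b for all t ≠ t'. Then for all tokens k and i, Σ_{j ∈ N1(k)} ⟨W_E(j), W_E(i)⟩ = (b₀ − b)·𝟙[D_H(i,k) = 1] − a(m − 2)·D_H(k, i) + (b − a)·m. -/
open Matrix

lemma flip_dist_one {m : ℕ} (k : Fin m → Bool) (p : Fin m) :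
    hammingDist k (Function.update k p (!k p)) = 1 := by
  rw [hammingDist]
  have : ({q | k q ≠ Function.update k p (!k p) q} : Finset (Fin m)) = {p} := by
    ext q
    by_cases h : q = p <;> simp [h, Function.update_apply]
  rw [this, Finset.card_singleton]

lemma flip_surj {m : ℕ} (k j : Fin m → Bool) (hj : hammingDist k j = 1) :
    ∃ p, Function.update k p (!k p) = j := by
  rw [hammingDist, Finset.card_eq_one] at hj
  obtain ⟨p, hp⟩ := hj
  refine ⟨p, funext fun q => ?_⟩
  by_cases h : q = p
  · subst h
    have : q ∈ ({q | k q ≠ j q} : Finset (Fin m)) := by rw [hp]; simp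
    simp only [Finset.mem_filter, Finset.mem_univ, true_and, Set.mem_setOf_eq] at this
    simp only [Function.update_self]
    revert this
    cases k q <;> cases j q <;> simp
  · have : q ∉ ({q | k q ≠ j q} : Finset (Fin m)) := by rw [hp]; simp [h]
    simp only [Finset.mem_filter, Finset.mem_univ, true_and, Set.mem_setOf_eq, not_not] at this
    simpa [Function.update_apply, h] using this

lemma flip_dist_cast {m : ℕ} (k i : Fin m → Bool) (p : Fin m) :
    (hammingDist (Function.update k p (!k p)) i : ℝ)
      = (hammingDist k i : ℝ) + (if k p = i p then 1 else -1) := by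
  have hA : ∀ x y : Fin m → Bool, hammingDist x y = ({q | x q ≠ y q} : Finset (Fin m)).card :=
    fun _ _ => rfl
  by_cases h : k p = i p
  · have hset : ({q | Function.update k p (!k p) q ≠ i q} : Finset (Fin m))
        = insert p ({q | k q ≠ i q} : Finset (Fin m)) := by
      ext q
      by_cases hq : q = p
      · subst hq
        simp only [Function.update_self, Finset.mem_insert, Finset.mem_filter,
          Finset.mem_univ, true_and, Set.mem_setOf_eq, true_or, iff_true, ← h]
        cases k q <;> simp
      · simp [Function.update_apply, hq]
    have hpnot : p ∉ ({q | k q ≠ i q} : Finset (Fin m)) := by simp [h]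
    rw [hA, hA, hset, Finset.card_insert_of_notMem hpnot, if_pos h]
    push_cast; ring
  · have hset : ({q | Function.update k p (!k p) q ≠ i q} : Finset (Fin m))
        = ({q | k q ≠ i q} : Finset (Fin m)).erase p := by
      ext q
      by_cases hq : q = p <;> simp [hq, Function.update_apply]
      cases hk : k p <;> cases hi : i p <;> simp_all
    have hpmem : p ∈ ({q | k q ≠ i q} : Finset (Fin m)) := by simp [h]
    rw [hA, hA, hset, if_neg h, Finset.cast_card_erase_of_mem hpmem]
    ring

/-- If the embeddings `W_E(t) ∈ ℝ^d` indexed by binary vectors `t ∈ {0,1}^m`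
(`m ≥ 2`) satisfy `⟨W_E(t), W_E(t)⟩ = b₀` and `⟨W_E(t), W_E(t')⟩ = −a·D_H(t,t') + b` for
`t ≠ t'`, then for all tokens `k, i`:
`Σ_{j ∈ N1(k)} ⟨W_E(j), W_E(i)⟩ = (b₀−b)·𝟙[D_H(i,k)=1] − a(m−2)·D_H(k,i) + (b−a)·m`. -/
theorem stmt_14 (m d : ℕ) (hm : 2 ≤ m) (a b b₀ : ℝ)
    (WE : (Fin m → Bool) → (Fin d → ℝ))
    (hdiag : ∀ t, WE t ⬝ᵥ WE t = b₀)
    (hoff : ∀ t t', t ≠ t' → WE t ⬝ᵥ WE t' = -a * (hammingDist t t' : ℝ) + b)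
    (k i : Fin m → Bool) :
    ∑ j ∈ Finset.univ.filter (fun j : Fin m → Bool => hammingDist k j = 1), WE j ⬝ᵥ WE i
      = (b₀ - b) * (if hammingDist i k = 1 then (1 : ℝ) else 0)
        - a * ((m : ℝ) - 2) * (hammingDist k i : ℝ) + (b - a) * (m : ℝ) := by
  classical
  set S := Finset.univ.filter (fun j : Fin m → Bool => hammingDist k j = 1) with hS
  set e : Fin m → (Fin m → Bool) := fun p => Function.update k p (!k p) with he
  have hsplit : ∀ j ∈ S, WE j ⬝ᵥ WE i
      = ((-a * (hammingDist j i : ℝ) + b) + (if j = i then b₀ - b else 0)) := by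
    intro j _
    by_cases hji : j = i
    · subst hji; simp [hdiag]
    · simp [hoff j i hji, hji]
  rw [Finset.sum_congr rfl hsplit, Finset.sum_add_distrib, Finset.sum_ite_eq' S i]
  have hre : ∑ j ∈ S, (-a * (hammingDist j i : ℝ) + b)
      = ∑ p : Fin m, (-a * (hammingDist (e p) i : ℝ) + b) := by
    refine (Finset.sum_bij (fun p _ => e p) ?_ ?_ ?_ ?_).symm
    · intro p _
      simp [hS, he, flip_dist_one]
    · intro p _ p' _ hpp'
      by_contra hne
      have hpe : e p = e p' := hpp'
      have h1 : e p p = !k p := by simp [he]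
      have h2 : e p' p = k p := by simp [he, Function.update_apply, hne]
      rw [hpe] at h1
      rw [h1] at h2
      simp at h2
    · intro j hj
      simp only [hS, Finset.mem_filter, Finset.mem_univ, true_and] at hj
      obtain ⟨p, hp⟩ := flip_surj k j hj
      exact ⟨p, Finset.mem_univ p, hp⟩
    · intros; rfl
  rw [hre]
  have hterm : ∀ p : Fin m, (-a * (hammingDist (e p) i : ℝ) + b)
      = (-a * (hammingDist k i : ℝ) + b) + (-a) * (if k p = i p then 1 else -1) := by
    intro p
    rw [he, flip_dist_cast]
    ring
  rw [Finset.sum_congr rfl (fun p _ => hterm p), Finset.sum_add_distrib,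
    Finset.sum_const, ← Finset.mul_sum]
  have hsum_ite : ∑ p : Fin m, (if k p = i p then (1:ℝ) else -1)
      = (m : ℝ) - 2 * (hammingDist k i : ℝ) := by
    have : ∀ p : Fin m, (if k p = i p then (1:ℝ) else -1)
        = 1 - 2 * (if k p ≠ i p then (1:ℝ) else 0) := by
      intro p; by_cases h : k p = i p <;> simp [h] <;> norm_num
    rw [Finset.sum_congr rfl (fun p _ => this p)]
    rw [Finset.sum_sub_distrib, Finset.sum_const, ← Finset.mul_sum, Finset.sum_boole]
    simp [hammingDist, Finset.card_univ]
  rw [hsum_ite, Finset.card_univ, Fintype.card_fin]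
  have hmem : i ∈ S ↔ hammingDist i k = 1 := by
    simp [hS, hammingDist_comm k i]
  by_cases hik : hammingDist i k = 1 <;>
    simp only [hmem, hik, if_true, if_false, nsmul_eq_mul, if_pos, if_neg, not_false_iff] <;>
    ring
end
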